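/- Any stationary positive componentwise solution of the viscous forced classic dyadic model satisfies the uniform bound Σ_{k=0}^n Y_k² ≤ ν^{-1} f² Y_0 for all n; in particular, every such solution is automatically in l². -/

import Mathlib

/-!
Multiplying the `n`-th equation by `Y n` turns it into the energy balance
`ν l_n Y_n² = Π_n - Π_{n+1}` for the flux `Π_n = k_n Y_{n-1}² Y_n`. Hence the dissipation telescopes,
`ν ∑_{k<n} l_k Y_k² = Π_0 - Π_n ≤ Π_0 = f² Y_0` since `Π_n ≥ 0`, and `l_k ≥ 1` gives the bound.
-/

open Finset

namespace ClassicDyadic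

variable {ν : ℝ} {k l X Y : ℕ → ℝ}

/-- The energy flux `Π_n = k_n Y_{n-1}² Y_n` into shell `n`, with `X n` standing for `Y_{n-1}`. -/
def energyFlux (k X Y : ℕ → ℝ) (n : ℕ) : ℝ := k n * X n ^ 2 * Y n

lemma energyFlux_nonneg (hk : ∀ n, 0 ≤ k n) (hY : ∀ n, 0 ≤ Y n) (n : ℕ) :
    0 ≤ energyFlux k X Y n :=
  mul_nonneg (mul_nonneg (hk n) (sq_nonneg _)) (hY n)

lemma dissipation_eq_energyFlux_sub (hX : ∀ n, X (n + 1) = Y n)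
    (hsta : ∀ n, -ν * l n * Y n + k n * X n ^ 2 - k (n + 1) * Y n * Y (n + 1) = 0) (n : ℕ) :
    ν * l n * Y n ^ 2 = energyFlux k X Y n - energyFlux k X Y (n + 1) := by
  rw [energyFlux, energyFlux, hX]
  linear_combination (-Y n) * hsta n

lemma dissipation_sum_eq (hX : ∀ n, X (n + 1) = Y n)
    (hsta : ∀ n, -ν * l n * Y n + k n * X n ^ 2 - k (n + 1) * Y n * Y (n + 1) = 0) (n : ℕ) :
    ν * ∑ i ∈ range n, l i * Y i ^ 2 = energyFlux k X Y 0 - energyFlux k X Y n := by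
  rw [← sum_range_sub', mul_sum]
  exact sum_congr rfl fun i _ => by rw [← dissipation_eq_energyFlux_sub hX hsta i, mul_assoc]

lemma sum_range_sq_le (hν : 0 < ν) (hk : ∀ n, 0 ≤ k n) (hl : ∀ n, 1 ≤ l n)
    (hY : ∀ n, 0 ≤ Y n) (hX : ∀ n, X (n + 1) = Y n)
    (hsta : ∀ n, -ν * l n * Y n + k n * X n ^ 2 - k (n + 1) * Y n * Y (n + 1) = 0) (n : ℕ) :
    ∑ i ∈ range n, Y i ^ 2 ≤ ν⁻¹ * energyFlux k X Y 0 := by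
  rw [le_inv_mul_iff₀ hν]
  calc ν * ∑ i ∈ range n, Y i ^ 2
      ≤ ν * ∑ i ∈ range n, l i * Y i ^ 2 := by
        gcongr with i
        exact le_mul_of_one_le_left (sq_nonneg _) (hl i)
    _ = energyFlux k X Y 0 - energyFlux k X Y n := dissipation_sum_eq hX hsta n
    _ ≤ energyFlux k X Y 0 := sub_le_self _ (energyFlux_nonneg hk hY n)

end ClassicDyadic

open ClassicDyadic in
theorem viscous_classic_dyadic_stationary_l2_bound_general
    (ν β γ f : ℝ) (hν : 0 < ν) (hγ : 0 < γ)
    (Y : ℕ → ℝ) (hpos : ∀ n : ℕ, 0 ≤ Y n)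
    (hsta : ∀ n : ℕ,
      -ν * (2:ℝ) ^ (γ * (n : ℝ)) * Y n
        + (2:ℝ) ^ (β * (n : ℝ)) * (if n = 0 then f else Y (n - 1)) ^ 2
        - (2:ℝ) ^ (β * ((n : ℝ) + 1)) * Y n * Y (n + 1) = 0) :
    (∀ n : ℕ, ∑ k ∈ Finset.range (n + 1), (Y k) ^ 2 ≤ ν⁻¹ * f ^ 2 * Y 0)
    ∧ Summable (fun n : ℕ => (Y n) ^ 2) := by
  set X : ℕ → ℝ := fun n => if n = 0 then f else Y (n - 1)
  have hk (n : ℕ) : 0 ≤ (2:ℝ) ^ (β * (n : ℝ)) := by positivity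
  have hl (n : ℕ) : 1 ≤ (2:ℝ) ^ (γ * (n : ℝ)) := Real.one_le_rpow one_le_two (by positivity)
  have hX (n : ℕ) : X (n + 1) = Y n := by simp [X]
  have hsta' (n : ℕ) : -ν * (2:ℝ) ^ (γ * (n : ℝ)) * Y n + (2:ℝ) ^ (β * (n : ℝ)) * X n ^ 2
      - (2:ℝ) ^ (β * ((n + 1 : ℕ) : ℝ)) * Y n * Y (n + 1) = 0 := by
    simpa only [Nat.cast_succ] using hsta n
  have hflux : energyFlux (fun n : ℕ => (2:ℝ) ^ (β * (n : ℝ))) X Y 0 = f ^ 2 * Y 0 := by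
    simp [energyFlux, X]
  have hbound := sum_range_sq_le hν hk hl hpos hX hsta'
  rw [hflux, ← mul_assoc] at hbound
  exact ⟨fun n => hbound (n + 1), summable_of_sum_range_le (fun n => sq_nonneg (Y n)) hbound⟩

theorem viscous_classic_dyadic_stationary_l2_bound
    (ν β γ f : ℝ) (hν : 0 < ν) (hβ : 0 < β) (hγ : 0 < γ) (hf : 0 < f)
    (Y : ℕ → ℝ) (hpos : ∀ n : ℕ, 0 ≤ Y n)
    (hsta : ∀ n : ℕ,
      -ν * (2:ℝ) ^ (γ * (n : ℝ)) * Y n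
        + (2:ℝ) ^ (β * (n : ℝ)) * (if n = 0 then f else Y (n - 1)) ^ 2
        - (2:ℝ) ^ (β * ((n : ℝ) + 1)) * Y n * Y (n + 1) = 0) :
    (∀ n : ℕ, ∑ k ∈ Finset.range (n + 1), (Y k) ^ 2 ≤ ν⁻¹ * f ^ 2 * Y 0)
    ∧ Summable (fun n : ℕ => (Y n) ^ 2) :=
  viscous_classic_dyadic_stationary_l2_bound_general ν β γ f hν hγ Y hpos hsta
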